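/- Let f = hom(-, H(α,β)) for a weighted graph H on q vertices with real vertex weights α and edge weights β. For every k ≥ 0, the k-connection matrix C(f,k) has rank at most q^k; more precisely, every row of C(f,k) is a real linear combination of at most q^k fixed vectors. -/

import Mathlib

/-
Split a map `t : V(G₁G₂) → V(H)` into its restriction `t₁` to `V(G₁)` and its values `s` on the
unlabeled vertices of `G₂`. The weight of `t` is the weight of `t₁` in `G₁` times a factor that
depends only on `s` and on `φ = t₁ ∘ lab`. Summing over `s`, then grouping the maps `t₁` by `φ`,
gives `f(G₁G₂) = ∑_φ hom_φ(G₁, H) · v_φ(G₂)`.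
-/

/-- A `k`-labeled graph: a finite graph (possibly with multiple edges, recorded by the
symmetric, loop-free edge multiplicity function `E`) together with an injective labeling
of `k` of its vertices by labels from `[k]`. -/
structure KGraph (k : ℕ) where
  V : Type
  [fin : Fintype V]
  E : V → V → ℕ
  symmE : ∀ a b, E a b = E b a
  loopfree : ∀ a, E a a = 0
  lab : Fin k → V
  inj : Function.Injective lab

namespace KGraph

variable {k : ℕ}

/-- The vertex set of the `k`-connection of `A` and `B`: all vertices of `A` together
with the unlabeled vertices of `B` (the labeled vertices of `B` get identified with
the equally-labeled vertices of `A`). -/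
abbrev GlueV (A B : KGraph k) : Type :=
  A.V ⊕ {b : B.V // ∀ i, b ≠ B.lab i}

open Classical in
/-- The canonical map from the vertices of `B` into the `k`-connection of `A` and `B`. -/
noncomputable def emb₂ (A B : KGraph k) (b : B.V) : GlueV A B :=
  if h : ∃ i, B.lab i = b then Sum.inl (A.lab (Classical.choose h))
  else Sum.inr ⟨b, fun i hb => h ⟨i, hb.symm⟩⟩

lemma emb₂_inj (A B : KGraph k) : Function.Injective (emb₂ A B) := by
  intro b b' h
  by_cases h1 : ∃ i, B.lab i = b <;> by_cases h2 : ∃ i, B.lab i = b'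
  · unfold emb₂ at h
    rw [dif_pos h1, dif_pos h2] at h
    have := A.inj (Sum.inl.inj h)
    rw [← Classical.choose_spec h1, ← Classical.choose_spec h2, this]
  · unfold emb₂ at h
    rw [dif_pos h1, dif_neg h2] at h
    exact absurd h (by simp)
  · unfold emb₂ at h
    rw [dif_neg h1, dif_pos h2] at h
    exact absurd h (by simp)
  · unfold emb₂ at h
    rw [dif_neg h1, dif_neg h2] at h
    exact congrArg Subtype.val (Sum.inr.inj h)

open Classical in
/-- The edge multiplicity function of the `k`-connection of `A` and `B`:
multiplicities coming from `A` and from `B` add up. -/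
noncomputable def glueE (A B : KGraph k) (x y : GlueV A B) : ℕ :=
  letI := B.fin
  (match x, y with
    | Sum.inl a, Sum.inl a' => A.E a a'
    | _, _ => 0)
  + ∑ b : B.V, ∑ b' : B.V,
      if emb₂ A B b = x ∧ emb₂ A B b' = y then B.E b b' else 0

lemma glueE_symm (A B : KGraph k) (x y : GlueV A B) : glueE A B x y = glueE A B y x := by
  classical
  letI := B.fin
  unfold glueE
  refine congrArg₂ (· + ·) ?_ ?_
  · rcases x with a | a <;> rcases y with a' | a' <;> simp [A.symmE]
  · rw [Finset.sum_comm]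
    refine Finset.sum_congr rfl fun b _ => Finset.sum_congr rfl fun b' _ => ?_
    exact if_congr and_comm (B.symmE b' b) rfl

lemma glueE_loopfree (A B : KGraph k) (x : GlueV A B) : glueE A B x x = 0 := by
  classical
  letI := B.fin
  unfold glueE
  have h1 : (match x, x with
    | Sum.inl a, Sum.inl a' => A.E a a'
    | _, _ => 0) = 0 := by
    rcases x with a | a <;> simp [A.loopfree]
  rw [h1]
  refine Nat.zero_add _ ▸ Finset.sum_eq_zero fun b _ => Finset.sum_eq_zero fun b' _ => ?_
  split_ifs with hb
  · obtain ⟨hb1, hb2⟩ := hb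
    have : b = b' := emb₂_inj A B (hb1.trans hb2.symm)
    rw [this, B.loopfree]
  · rfl

/-- The `k`-connection (gluing) of two `k`-labeled graphs: take the disjoint union and
identify equally-labeled vertices. -/
noncomputable def glue (A B : KGraph k) : KGraph k where
  V := GlueV A B
  fin := by
    have := A.fin; have := B.fin
    classical
    exact inferInstance
  E := glueE A B
  symmE := glueE_symm A B
  loopfree := glueE_loopfree A B
  lab := fun i => Sum.inl (A.lab i)
  inj := fun i j h => A.inj (Sum.inl.inj h)

open Classical in
/-- The partition function `hom(-, H(α,β))` of the weighted graph `H(α,β)` on `q`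
vertices with vertex weights `α` and edge weights `β`, evaluated on (the underlying
graph of) a `k`-labeled graph `X`:
`Σ_{t : V(X) → [q]} Π_v α(t v) · Π_{(u,v) ∈ V(X)²} β(t u, t v) ^ E(u,v)`. -/
noncomputable def Z (q : ℕ) (α : Fin q → ℝ) (β : Matrix (Fin q) (Fin q) ℝ)
    (X : KGraph k) : ℝ :=
  letI := X.fin
  ∑ t : X.V → Fin q,
    (∏ w : X.V, α (t w)) * ∏ p : X.V × X.V, β (t p.1) (t p.2) ^ X.E p.1 p.2

open Classical in
/-- The restricted partition function `hom_φ(X, H(α,β))`: the weighted homomorphism sum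
over maps extending `φ` on the labeled vertices. -/
noncomputable def homRestrict (q : ℕ) (α : Fin q → ℝ) (β : Matrix (Fin q) (Fin q) ℝ)
    (X : KGraph k) (φ : Fin k → Fin q) : ℝ :=
  letI := X.fin
  ∑ t : X.V → Fin q,
    if ∀ i, t (X.lab i) = φ i then
      (∏ w : X.V, α (t w)) * ∏ p : X.V × X.V, β (t p.1) (t p.2) ^ X.E p.1 p.2
    else 0

end KGraph

theorem Fintype.sum_mul_comp_eq_sum_fiber {ι κ R : Type*} [Fintype ι] [Fintype κ]
    [DecidableEq κ] [NonUnitalNonAssocSemiring R] (π : ι → κ) (f : ι → R) (g : κ → R) :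
    ∑ i, f i * g (π i) = ∑ j, (∑ i, if π i = j then f i else 0) * g j := by
  simp only [Finset.sum_mul, ite_mul, zero_mul]
  rw [Finset.sum_comm]
  simp

theorem Fintype.prod_pow_sum_ite_eq {X Y M : Type*} [Fintype X] [Fintype Y] [DecidableEq X]
    [CommMonoid M] (e : Y → X) (f : X → M) (n : Y → ℕ) :
    ∏ x, f x ^ (∑ y, if e y = x then n y else 0) = ∏ y, f (e y) ^ n y := by
  simp only [← Finset.prod_pow_eq_pow_sum, pow_ite, pow_zero]
  rw [Finset.prod_comm]
  simp

noncomputable section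

namespace KGraph

attribute [local instance] KGraph.fin

open Classical

variable {k q : ℕ}

abbrev Unlabeled (B : KGraph k) : Type := {b : B.V // ∀ i, b ≠ B.lab i}

def extMap (B : KGraph k) (φ : Fin k → Fin q) (s : B.Unlabeled → Fin q) : B.V → Fin q :=
  fun b => if h : ∃ i, B.lab i = b then φ (Classical.choose h)
    else s ⟨b, fun i hb => h ⟨i, hb.symm⟩⟩

theorem elim_comp_emb₂ (A B : KGraph k) (t : A.V → Fin q) (s : B.Unlabeled → Fin q) :
    Sum.elim t s ∘ emb₂ A B = B.extMap (t ∘ A.lab) s := by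
  ext b
  by_cases h : ∃ i, B.lab i = b <;> simp [emb₂, extMap, h]

theorem prod_pow_glueE {M : Type*} [CommMonoid M] (A B : KGraph k)
    (f : GlueV A B → GlueV A B → M) :
    ∏ p : GlueV A B × GlueV A B, f p.1 p.2 ^ glueE A B p.1 p.2
      = (∏ p : A.V × A.V, f (.inl p.1) (.inl p.2) ^ A.E p.1 p.2)
        * ∏ p : B.V × B.V, f (emb₂ A B p.1) (emb₂ A B p.2) ^ B.E p.1 p.2 := by
  have hA : ∏ p : GlueV A B × GlueV A B, f p.1 p.2 ^ (match p.1, p.2 with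
      | .inl a, .inl a' => A.E a a'
      | _, _ => 0) = ∏ p : A.V × A.V, f (.inl p.1) (.inl p.2) ^ A.E p.1 p.2 := by
    simp [Fintype.prod_prod_type, Fintype.prod_sum_type]
  have hB : ∏ p : GlueV A B × GlueV A B,
      f p.1 p.2 ^ (∑ b, ∑ b', if emb₂ A B b = p.1 ∧ emb₂ A B b' = p.2 then B.E b b' else 0)
        = ∏ c : B.V × B.V, f (emb₂ A B c.1) (emb₂ A B c.2) ^ B.E c.1 c.2 := by
    refine Eq.trans ?_ (Fintype.prod_pow_sum_ite_eq (Prod.map (emb₂ A B) (emb₂ A B))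
      (fun p => f p.1 p.2) fun c => B.E c.1 c.2)
    simp [Fintype.sum_prod_type, Prod.ext_iff]
  rw [← hA, ← hB, ← Finset.prod_mul_distrib]
  simp only [glueE, pow_add]

variable (α : Fin q → ℝ) (β : Matrix (Fin q) (Fin q) ℝ)

def weight (X : KGraph k) (t : X.V → Fin q) : ℝ :=
  (∏ w, α (t w)) * ∏ p : X.V × X.V, β (t p.1) (t p.2) ^ X.E p.1 p.2

theorem Z_eq_sum_weight (X : KGraph k) : Z q α β X = ∑ t, weight α β X t := rfl

theorem homRestrict_eq_sum_weight (X : KGraph k) (φ : Fin k → Fin q) :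
    homRestrict q α β X φ = ∑ t, if t ∘ X.lab = φ then weight α β X t else 0 := by
  simp only [homRestrict, weight, funext_iff, Function.comp_apply]

-- The labeled vertices carry no vertex weight here: it is counted in the coefficient
-- `homRestrict`.
def homExtending (φ : Fin k → Fin q) (B : KGraph k) : ℝ :=
  ∑ s : B.Unlabeled → Fin q, (∏ u, α (s u)) *
    ∏ p : B.V × B.V, β (B.extMap φ s p.1) (B.extMap φ s p.2) ^ B.E p.1 p.2

theorem weight_glue_sumElim (A B : KGraph k) (t : A.V → Fin q) (s : B.Unlabeled → Fin q) :
    weight α β (A.glue B) (Sum.elim t s) = weight α β A t * ((∏ u, α (s u)) *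
      ∏ p : B.V × B.V,
        β (B.extMap (t ∘ A.lab) s p.1) (B.extMap (t ∘ A.lab) s p.2) ^ B.E p.1 p.2) := by
  change (∏ w : GlueV A B, α (Sum.elim t s w)) *
    ∏ p : GlueV A B × GlueV A B, β (Sum.elim t s p.1) (Sum.elim t s p.2) ^ glueE A B p.1 p.2 = _
  rw [Fintype.prod_sum_type, prod_pow_glueE A B fun x y => β (Sum.elim t s x) (Sum.elim t s y),
    weight, ← elim_comp_emb₂]
  simp only [Sum.elim_inl, Sum.elim_inr, Function.comp_apply]
  ring

theorem Z_glue (A B : KGraph k) :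
    Z q α β (A.glue B)
      = ∑ t : A.V → Fin q, weight α β A t * homExtending α β (t ∘ A.lab) B := by
  calc Z q α β (A.glue B)
      = ∑ t : GlueV A B → Fin q, weight α β (A.glue B) t := by
        rw [Z_eq_sum_weight]
        congr 2
        exact Subsingleton.elim _ _
    _ = ∑ p : (A.V → Fin q) × (B.Unlabeled → Fin q),
          weight α β (A.glue B) (Sum.elim p.1 p.2) :=
        (Fintype.sum_equiv (Equiv.sumArrowEquivProdArrow _ _ _).symm _ _ fun _ => rfl).symm
    _ = _ := by
        simp only [Fintype.sum_prod_type, weight_glue_sumElim, homExtending, Finset.mul_sum]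

theorem Z_glue_eq_sum_homRestrict_mul (A B : KGraph k) :
    Z q α β (A.glue B) = ∑ φ, homRestrict q α β A φ * homExtending α β φ B := by
  rw [Z_glue,
    Fintype.sum_mul_comp_eq_sum_fiber (· ∘ A.lab) (weight α β A) (homExtending α β · B)]
  simp only [homRestrict_eq_sum_weight]

end KGraph

end

/-- Freedman–Lovász–Schrijver: if `f = hom(-, H(α,β))` for a weighted graph `H` on `q`
vertices, then for every `k ≥ 0` the `k`-connection matrix `C(f,k)` has rank at most
`q^k`: every row of `C(f,k)` is a real linear combination of `q^k` fixed vectors,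
indexed by the maps `φ : [k] → V(H)`. -/
theorem connection_matrix_rank_le
    (q k : ℕ) (α : Fin q → ℝ) (β : Matrix (Fin q) (Fin q) ℝ) :
    ∃ vecs : (Fin k → Fin q) → KGraph k → ℝ,
      ∀ G₁ : KGraph k, ∃ c : (Fin k → Fin q) → ℝ,
        ∀ G₂ : KGraph k,
          KGraph.Z q α β (G₁.glue G₂) = ∑ φ : Fin k → Fin q, c φ * vecs φ G₂ :=
  ⟨KGraph.homExtending α β, fun A =>
    ⟨KGraph.homRestrict q α β A, KGraph.Z_glue_eq_sum_homRestrict_mul α β A⟩⟩
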